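/- arXiv:math/9806151 — 4 statements merged into one kernel-verified Lean document; each statement's English description precedes it below -/
import Mathlib

section
/- Let N ≥ 1 and let s : {1,…,N} × {1,…,N} → ℕ be a tournament matrix, i.e. s(i,i) = 0 for all i and s(i,j) + s(j,i) = 1 for all i ≠ j, with scores γ(i) = Σ_{j=1}^N s(i,j). If the scores γ(1), …, γ(N) are pairwise distinct, then the number of pairs (i,j) with i < j and s(j,i) = 1 equals the number of pairs (i,j) with i < j and γ(i) < γ(j). -/
/-- For a tournament matrix `s` on `N ≥ 1` players (i.e. `s i i = 0` and
`s i j + s j i = 1` for `i ≠ j`), with scores `γ i = ∑ j, s i j`: if the scores are pairwise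
distinct, then the number of pairs `(i, j)` with `i < j` and `s j i = 1` (the statistic
`d(s)`) equals the number of pairs `(i, j)` with `i < j` and `γ i < γ j`. -/
theorem tournament_distinct_scores_inversions (N : ℕ) (hN : 1 ≤ N) (s : Fin N → Fin N → ℕ)
    (hdiag : ∀ i, s i i = 0) (hpair : ∀ i j, i ≠ j → s i j + s j i = 1)
    (γ : Fin N → ℕ) (hγ : ∀ i, γ i = ∑ j, s i j)
    (hdist : Function.Injective γ) :
    ((Finset.univ : Finset (Fin N × Fin N)).filter
        (fun p => p.1 < p.2 ∧ s p.2 p.1 = 1)).card =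
      ((Finset.univ : Finset (Fin N × Fin N)).filter
        (fun p => p.1 < p.2 ∧ γ p.1 < γ p.2)).card := by
  classical
  -- scores are < N
  have hlt : ∀ i, γ i < N := by
    intro i
    have h1 : γ i = ∑ j ∈ Finset.univ.erase i, s i j := by
      rw [hγ, ← Finset.add_sum_erase Finset.univ _ (Finset.mem_univ i), hdiag, zero_add]
    have h2 : ∑ j ∈ Finset.univ.erase i, s i j ≤ ∑ j ∈ Finset.univ.erase i, 1 := by
      apply Finset.sum_le_sum
      intro j hj
      have hji : j ≠ i := (Finset.mem_erase.mp hj).1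
      have := hpair i j (Ne.symm hji)
      omega
    simp only [Finset.sum_const, smul_eq_mul, mul_one, Finset.card_erase_of_mem
      (Finset.mem_univ i), Finset.card_univ, Fintype.card_fin] at h2
    omega
  have hinj' : Function.Injective (fun i => (⟨γ i, hlt i⟩ : Fin N)) := by
    intro a b hab
    exact hdist (congrArg Fin.val hab)
  have hsurj' : Function.Surjective (fun i => (⟨γ i, hlt i⟩ : Fin N)) :=
    Finite.surjective_of_injective hinj'
  -- key: γ j < γ i → s i j = 1
  have beats : ∀ i j : Fin N, γ j < γ i → s i j = 1 := by
    intro i0 j0 hij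
    set m := γ i0 with hm
    set T : Finset (Fin N) := Finset.univ.filter (fun i => γ i < m) with hT
    have hj0T : j0 ∈ T := Finset.mem_filter.mpr ⟨Finset.mem_univ _, hij⟩
    have hi0T : i0 ∉ T := by
      simp only [hT, Finset.mem_filter, Finset.mem_univ, true_and]
      omega
    have himg : T.image γ = Finset.range m := by
      apply Finset.Subset.antisymm
      · intro k hk
        obtain ⟨a, ha, rfl⟩ := Finset.mem_image.mp hk
        exact Finset.mem_range.mpr ((Finset.mem_filter.mp ha).2)
      · intro k hk
        rw [Finset.mem_range] at hk
        have hkN : k < N := hk.trans (hlt i0)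
        obtain ⟨a, ha⟩ := hsurj' ⟨k, hkN⟩
        have hak : γ a = k := congrArg Fin.val ha
        exact Finset.mem_image.mpr ⟨a, Finset.mem_filter.mpr ⟨Finset.mem_univ a,
          by rw [hak]; exact hk⟩, hak⟩
    have hsumT : ∑ i ∈ T, γ i = ∑ k ∈ Finset.range m, k := by
      rw [← himg, Finset.sum_image (fun a _ b _ h => hdist h)]
    have hcardT : T.card = m := by
      have := Finset.card_image_of_injective T hdist
      rw [himg, Finset.card_range] at this
      omega
    have hswap : ∑ p ∈ T.offDiag, s p.1 p.2 = ∑ p ∈ T.offDiag, s p.2 p.1 := by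
      apply Finset.sum_nbij' (fun p => Prod.swap p) (fun p => Prod.swap p)
      · intro p hp
        rw [Finset.mem_offDiag] at hp ⊢
        exact ⟨hp.2.1, hp.1, fun h => hp.2.2 h.symm⟩
      · intro p hp
        rw [Finset.mem_offDiag] at hp ⊢
        exact ⟨hp.2.1, hp.1, fun h => hp.2.2 h.symm⟩
      · intro p _; simp
      · intro p _; simp
      · intro p _; simp
    have hoffsum : 2 * ∑ p ∈ T.offDiag, s p.1 p.2 = m * (m - 1) := by
      have h1 : ∑ p ∈ T.offDiag, s p.1 p.2 + ∑ p ∈ T.offDiag, s p.2 p.1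
          = ∑ p ∈ T.offDiag, (s p.1 p.2 + s p.2 p.1) := (Finset.sum_add_distrib).symm
      have h2 : ∑ p ∈ T.offDiag, (s p.1 p.2 + s p.2 p.1) = T.offDiag.card := by
        rw [Finset.card_eq_sum_ones]
        apply Finset.sum_congr rfl
        intro p hp
        exact hpair p.1 p.2 (Finset.mem_offDiag.mp hp).2.2
      have h3 : T.offDiag.card = m * m - m := by
        rw [Finset.offDiag_card, hcardT]
      have hmm : m ≤ m * m := Nat.le_mul_of_pos_left m (by omega) |>.trans_eq rfl
      have : m * (m - 1) = m * m - m := by cases m with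
        | zero => simp
        | succ n => simp [Nat.mul_succ, Nat.succ_mul]
      omega
    have hTT : ∑ i ∈ T, ∑ j ∈ T, s i j = ∑ p ∈ T.offDiag, s p.1 p.2 := by
      rw [← Finset.sum_product']
      have hod : T.offDiag = (T ×ˢ T).filter (fun p => p.1 ≠ p.2) := by
        ext p
        simp [Finset.mem_offDiag, Finset.mem_filter, Finset.mem_product, and_assoc]
      rw [hod]
      rw [Finset.sum_filter_of_ne]
      intro p _ hne
      intro h
      apply hne
      rw [show p.1 = p.2 from h, hdiag]
    have hdecomp : ∑ i ∈ T, γ i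
        = ∑ p ∈ T.offDiag, s p.1 p.2 + ∑ i ∈ T, ∑ j ∈ Finset.univ \ T, s i j := by
      have h1 : ∀ i ∈ T, γ i = ∑ j ∈ T, s i j + ∑ j ∈ Finset.univ \ T, s i j := by
        intro i _
        rw [hγ, ← Finset.sum_union (Finset.disjoint_sdiff), Finset.union_sdiff_of_subset
          (Finset.subset_univ T)]
      rw [Finset.sum_congr rfl h1, Finset.sum_add_distrib, hTT]
    have hgauss : 2 * ∑ k ∈ Finset.range m, k = m * (m - 1) := by
      have := Finset.sum_range_id_mul_two m
      omega
    have hcross : ∑ i ∈ T, ∑ j ∈ Finset.univ \ T, s i j = 0 := by omega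
    have hzero : s j0 i0 = 0 := by
      rw [Finset.sum_eq_zero_iff] at hcross
      have := hcross j0 hj0T
      rw [Finset.sum_eq_zero_iff] at this
      exact this i0 (Finset.mem_sdiff.mpr ⟨Finset.mem_univ _, hi0T⟩)
    have hne : i0 ≠ j0 := by
      intro h; subst h; omega
    have := hpair i0 j0 hne
    omega
  -- the two sets are equal
  congr 1
  apply Finset.filter_congr
  intro p _
  simp only [eq_iff_iff, and_congr_right_iff]
  intro hlt12
  have hne : p.1 ≠ p.2 := ne_of_lt hlt12
  constructor
  · intro h1
    rcases lt_or_gt_of_ne (fun h => hne (hdist h)) with h | h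
    · exact h
    · have hb := beats p.1 p.2 h
      have := hpair p.1 p.2 hne
      omega
  · intro h
    exact beats p.2 p.1 h
end

section
/- Let N ≥ 1 and consider the polynomial P = ∏_{1 ≤ i < j ≤ N} (z_i − t·z_j) in the polynomial ring ℤ[t][z_1, …, z_N]. Then P = Σ_s (−t)^{d(s)} · z_1^{γ(1)} ⋯ z_N^{γ(N)}, where the sum runs over all tournament matrices s on N players, γ(i) = Σ_{j=1}^N s(i,j) is the score of i, and d(s) is the number of pairs (i,j) with i < j and s(j,i) = 1. -/
open MvPolynomial

/-- In `ℤ[t][z_1, …, z_N]`, the product `∏_{i<j} (z_i − t z_j)` equals the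
sum, over all tournament matrices `s` on `N` players (`S` is the finite set of all such
matrices), of `(−t)^{d(s)} · z_1^{γ(1)} ⋯ z_N^{γ(N)}`, where `γ i = ∑ j, s i j` is the score
of `i` and `d(s)` is the number of pairs `(i, j)` with `i < j` and `s j i = 1`. -/
theorem tournament_expansion (N : ℕ) (hN : 1 ≤ N)
    (S : Finset (Fin N → Fin N → ℕ))
    (hS : ∀ s : Fin N → Fin N → ℕ,
      s ∈ S ↔ ((∀ i, s i i = 0) ∧ ∀ i j, i ≠ j → s i j + s j i = 1)) :
    (∏ p ∈ (Finset.univ : Finset (Fin N × Fin N)).filter (fun p => p.1 < p.2),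
        (X p.1 - C Polynomial.X * X p.2) : MvPolynomial (Fin N) (Polynomial ℤ)) =
      ∑ s ∈ S,
        (-(C Polynomial.X : MvPolynomial (Fin N) (Polynomial ℤ))) ^
            (((Finset.univ : Finset (Fin N × Fin N)).filter
              (fun p => p.1 < p.2 ∧ s p.2 p.1 = 1)).card) *
          ∏ i, X i ^ (∑ j, s i j) := by
  classical
  set t : MvPolynomial (Fin N) (Polynomial ℤ) := C Polynomial.X with ht
  set pairs : Finset (Fin N × Fin N) := Finset.univ.filter (fun p => p.1 < p.2) with hpairs
  -- generic monomial lemma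
  have key : ∀ (s : Fin N → Fin N → ℕ), (∀ i, s i i = 0) →
      (∏ i, (X i : MvPolynomial (Fin N) (Polynomial ℤ)) ^ (∑ j, s i j)) =
      ∏ p ∈ pairs, (X p.1 ^ s p.1 p.2 * X p.2 ^ s p.2 p.1) := by
    intro s hdiag
    have h1 : (∏ i, (X i : MvPolynomial (Fin N) (Polynomial ℤ)) ^ (∑ j, s i j)) =
        ∏ p ∈ (Finset.univ ×ˢ Finset.univ : Finset (Fin N × Fin N)), X p.1 ^ s p.1 p.2 := by
      rw [Finset.prod_product]
      exact Finset.prod_congr rfl fun i _ => (Finset.prod_pow_eq_pow_sum _ _ _).symm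
    rw [h1, Finset.univ_product_univ,
      ← Finset.prod_filter_mul_prod_filter_not Finset.univ (fun p : Fin N × Fin N => p.1 < p.2)]
    have h2 : (∏ p ∈ Finset.univ.filter (fun p : Fin N × Fin N => ¬ p.1 < p.2),
        (X p.1 : MvPolynomial (Fin N) (Polynomial ℤ)) ^ s p.1 p.2) =
        ∏ p ∈ Finset.univ.filter (fun p : Fin N × Fin N => p.2 < p.1), X p.1 ^ s p.1 p.2 := by
      refine (Finset.prod_subset ?_ ?_).symm
      · intro p hp
        simp only [Finset.mem_filter, Finset.mem_univ, true_and] at *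
        omega
      · intro p hp hnp
        simp only [Finset.mem_filter, Finset.mem_univ, true_and] at hp hnp
        have heq : p.1 = p.2 := le_antisymm (not_lt.mp hnp) (not_lt.mp hp)
        rw [heq, hdiag p.2, pow_zero]
    rw [h2]
    have h3 : (∏ p ∈ Finset.univ.filter (fun p : Fin N × Fin N => p.2 < p.1),
        (X p.1 : MvPolynomial (Fin N) (Polynomial ℤ)) ^ s p.1 p.2) =
        ∏ p ∈ pairs, X p.2 ^ s p.2 p.1 := by
      refine Finset.prod_nbij' Prod.swap Prod.swap ?_ ?_ ?_ ?_ ?_ <;>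
        simp [hpairs, Prod.swap]
    rw [h3, ← Finset.prod_mul_distrib]
  -- expand the product
  have factor : ∀ p ∈ pairs, (X p.1 - t * X p.2 : MvPolynomial (Fin N) (Polynomial ℤ)) =
      X p.1 + (-t) * X p.2 := fun p _ => by ring
  rw [Finset.prod_congr rfl factor, Finset.prod_add]
  -- bijection
  set sOf : Finset (Fin N × Fin N) → Fin N → Fin N → ℕ := fun T i j =>
    if i < j then (if (i, j) ∈ T then 1 else 0)
    else if j < i then (if (j, i) ∈ T then 0 else 1) else 0 with hsOf
  refine Finset.sum_nbij' sOf (fun s => pairs.filter (fun p => s p.1 p.2 = 1)) ?_ ?_ ?_ ?_ ?_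
  · -- sOf T ∈ S
    intro T hT
    rw [hS]
    constructor
    · intro i; simp [hsOf]
    · intro i j hij
      simp only [hsOf]
      rcases lt_trichotomy i j with h | h | h
      · simp only [if_pos h, if_neg (asymm h)]
        split_ifs <;> omega
      · exact absurd h hij
      · simp only [if_pos h, if_neg (asymm h)]
        split_ifs <;> omega
  · -- TOf s ∈ powerset
    intro s _
    exact Finset.mem_powerset.mpr (Finset.filter_subset _ _)
  · -- left inverse
    intro T hT
    have hTp := Finset.mem_powerset.mp hT
    ext p
    simp only [Finset.mem_filter, hsOf]
    constructor
    · rintro ⟨hp, hv⟩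
      have hlt : p.1 < p.2 := by
        simpa [hpairs] using hp
      rw [if_pos hlt] at hv
      by_cases h : (p.1, p.2) ∈ T
      · exact h
      · rw [if_neg h] at hv; omega
    · intro hpT
      have hp : p ∈ pairs := hTp hpT
      have hlt : p.1 < p.2 := by simpa [hpairs] using hp
      exact ⟨hp, by rw [if_pos hlt, if_pos hpT]⟩
  · -- right inverse
    intro s hsS
    obtain ⟨hd, hsum⟩ := (hS s).mp hsS
    funext i j
    simp only [hsOf, Finset.mem_filter, hpairs, Finset.mem_univ, true_and]
    rcases lt_trichotomy i j with h | h | h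
    · simp only [if_pos h, if_neg (asymm h)]
      have := hsum i j h.ne
      split_ifs <;> omega
    · subst h
      simp only [if_neg (lt_irrefl i), hd]
    · simp only [if_pos h, if_neg (asymm h)]
      have := hsum i j h.ne'
      split_ifs <;> omega
  · -- terms agree
    intro T hT
    have hTp := Finset.mem_powerset.mp hT
    have hcard : Finset.univ.filter
        (fun p : Fin N × Fin N => p.1 < p.2 ∧ sOf T p.2 p.1 = 1) = pairs \ T := by
      ext p
      simp only [Finset.mem_filter, Finset.mem_univ, true_and, Finset.mem_sdiff, hpairs, hsOf]
      constructor
      · rintro ⟨hlt, hv⟩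
        rw [if_neg (asymm hlt), if_pos hlt] at hv
        refine ⟨by simp [hlt], ?_⟩
        intro hmem
        rw [if_pos hmem] at hv
        omega
      · rintro ⟨hp, hnm⟩
        have hlt : p.1 < p.2 := by simpa using hp
        refine ⟨hlt, ?_⟩
        rw [if_neg (asymm hlt), if_pos hlt, if_neg hnm]
    rw [hcard, key (sOf T) (fun i => by simp [hsOf])]
    have hmono : (∏ p ∈ pairs, (X p.1 : MvPolynomial (Fin N) (Polynomial ℤ)) ^ sOf T p.1 p.2 *
        X p.2 ^ sOf T p.2 p.1) =
        (∏ p ∈ T, X p.1) * ∏ p ∈ pairs \ T, X p.2 := by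
      have step : ∀ p ∈ pairs, (X p.1 : MvPolynomial (Fin N) (Polynomial ℤ)) ^ sOf T p.1 p.2 *
          X p.2 ^ sOf T p.2 p.1 = if p ∈ T then X p.1 else X p.2 := by
        intro p hp
        have hlt : p.1 < p.2 := by simpa [hpairs] using hp
        simp only [hsOf, if_pos hlt, if_neg (asymm hlt)]
        by_cases hm : p ∈ T <;> simp [hm]
      rw [Finset.prod_congr rfl step, Finset.prod_ite _ _]
      congr 1
      · congr 1
        rw [Finset.filter_mem_eq_inter, Finset.inter_eq_right.mpr hTp]
      · congr 1
        rw [Finset.sdiff_eq_filter]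
    rw [hmono]
    have hneg : (∏ p ∈ pairs \ T, ((-t) * X p.2 : MvPolynomial (Fin N) (Polynomial ℤ))) =
        (-t) ^ (pairs \ T).card * ∏ p ∈ pairs \ T, X p.2 := by
      rw [Finset.prod_mul_distrib, Finset.prod_const]
    rw [hneg]
    ring
end

section
/- Let K = ℚ(q) be the field of rational functions over ℚ and let bar : K → K denote the unique ℚ-algebra automorphism with q ↦ q^{−1}, extended coefficientwise to power series in K[[z]]. Define ξ(z) = exp( −Σ_{n ≥ 1} (1/n) · q^{2n}/(1 + q^{2n}) · zⁿ ) ∈ K[[z]] (this is the series (q²z; q⁴)_∞ / (q⁴z; q⁴)_∞). Then ξ(z) · bar(ξ(z)) = 1 − z; equivalently, bar(ξ(z)) = (1 − z)/ξ(z). -/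
open PowerSeries

/-- The coefficientwise (product) topology on `K[[z]]` for `K = ℚ(q)`: the product topology
on the coefficient functions, with each (discrete) coefficient space `K`. -/
noncomputable instance ratFuncPowerSeriesTopology :
    TopologicalSpace (PowerSeries (RatFunc ℚ)) :=
  @Pi.topologicalSpace (Unit →₀ ℕ) (fun _ => RatFunc ℚ) (fun _ => ⊥)

/-- The exponential of a formal power series over `ℚ(q)`, `exp F = ∑_{n ≥ 0} Fⁿ/n!`,
defined as an infinite sum in the coefficientwise topology. -/
noncomputable def psExp (F : PowerSeries (RatFunc ℚ)) : PowerSeries (RatFunc ℚ) :=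
  ∑' n : ℕ, (n.factorial : ℚ)⁻¹ • F ^ n

/-- The series `ξ(z) = exp( −∑_{n ≥ 1} (1/n) · q^{2n}/(1 + q^{2n}) · zⁿ ) ∈ ℚ(q)[[z]]`,
i.e. `(q²z; q⁴)_∞ / (q⁴z; q⁴)_∞`. -/
noncomputable def xiSeries : PowerSeries (RatFunc ℚ) :=
  psExp (- ∑' n : ℕ,
    PowerSeries.C
        (((n : RatFunc ℚ) + 1)⁻¹ * RatFunc.X ^ (2 * (n + 1)) *
          (1 + RatFunc.X ^ (2 * (n + 1)))⁻¹) *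
      PowerSeries.X ^ (n + 1))

/-!
Write `ξ = exp(-A)` with `A = ∑ cₙ z^(n+1)`, `cₙ = q^(2(n+1)) / ((n+1)(1 + q^(2(n+1))))`.
Since `t/(1+t) + t⁻¹/(1+t⁻¹) = 1`, we get `A + bar A = ∑ z^(n+1)/(n+1) = -log(1-z)`, hence
`ξ · bar ξ = exp(-(A + bar A)) = 1 - z`. The three properties of `exp` this needs (it turns sums
into products, commutes with coefficientwise ring maps, and inverts `log(1-z)`) all follow from
uniqueness of solutions of `E' = F' E` with `E(0) = 1`.
-/

namespace PowerSeries

variable {R S : Type*}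

@[simp]
theorem constantCoeff_map [Semiring R] [Semiring S] (f : R →+* S) (g : R⟦X⟧) :
    constantCoeff (map f g) = f (constantCoeff g) := by
  rw [← coeff_zero_eq_constantCoeff_apply, coeff_map, coeff_zero_eq_constantCoeff_apply]

theorem derivative_map [CommSemiring R] [CommSemiring S] (f : R →+* S) (g : R⟦X⟧) :
    d⁄dX S (map f g) = map f (d⁄dX R g) := by
  ext n
  simp [coeff_derivative, coeff_map]

theorem eq_of_derivative_eq_mul_self [Field R] [CharZero R] {H G₁ G₂ : R⟦X⟧}
    (h₁ : d⁄dX R G₁ = H * G₁) (h₂ : d⁄dX R G₂ = H * G₂)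
    (h₀ : constantCoeff G₁ = constantCoeff G₂) (hG₂ : constantCoeff G₂ ≠ 0) : G₁ = G₂ := by
  have hinv : G₂ * G₂⁻¹ = 1 := PowerSeries.mul_inv_cancel G₂ hG₂
  have hquot : G₁ * G₂⁻¹ = 1 := by
    refine derivative.ext ?_ ?_
    · rw [Derivation.leibniz, derivative_inv', h₁, h₂, derivative_one, smul_eq_mul, smul_eq_mul]
      linear_combination (-(H * G₁ * G₂⁻¹)) * hinv
    · rw [map_mul, map_one, constantCoeff_inv, h₀, mul_inv_cancel₀ hG₂]
  calc G₁ = G₁ * G₂⁻¹ * G₂ := by rw [mul_assoc, PowerSeries.inv_mul_cancel G₂ hG₂, mul_one]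
    _ = G₂ := by rw [hquot, one_mul]

namespace WithPiTopology

open scoped WithPiTopology

variable [TopologicalSpace R]

theorem hasSum_C_mul_X_pow_succ [Semiring R] (a : ℕ → R) :
    HasSum (fun n => C (a n) * X ^ (n + 1)) (X * mk a) := by
  rw [hasSum_iff_hasSum_coeff]
  rintro (_ | d)
  · simp
  · refine (hasSum_single d fun n hn => ?_).trans_eq ?_
    · simp [hn.symm]
    · simp

theorem hasSum_derivative [CommSemiring R] [IsTopologicalSemiring R] {ι : Type*}
    {f : ι → R⟦X⟧} {g : R⟦X⟧} (h : HasSum f g) :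
    HasSum (fun i => d⁄dX R (f i)) (d⁄dX R g) := by
  rw [hasSum_iff_hasSum_coeff] at h ⊢
  intro d
  simp only [coeff_derivative]
  exact (h (d + 1)).mul_right _

end WithPiTopology

end PowerSeries

theorem RatFunc.one_add_X_pow_ne_zero {K : Type*} [Field K] {m : ℕ} (hm : m ≠ 0) :
    (1 + RatFunc.X ^ m : RatFunc K) ≠ 0 := by
  have h : (1 + RatFunc.X ^ m : RatFunc K) =
      algebraMap (Polynomial K) (RatFunc K) (1 + Polynomial.X ^ m) := by
    rw [map_add, map_one, map_pow, RatFunc.algebraMap_X]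
  rw [h]
  refine RatFunc.algebraMap_ne_zero fun h => ?_
  simpa [zero_pow hm] using congrArg (Polynomial.eval 0) h

/-- The coefficient of `z^(n+1)` in `-log ξ`. -/
noncomputable def xiLogCoeff (n : ℕ) : RatFunc ℚ :=
  ((n : RatFunc ℚ) + 1)⁻¹ * RatFunc.X ^ (2 * (n + 1)) * (1 + RatFunc.X ^ (2 * (n + 1)))⁻¹

theorem xiLogCoeff_add_map (σ : RatFunc ℚ →+* RatFunc ℚ) (hσ : σ RatFunc.X = RatFunc.X⁻¹)
    (n : ℕ) : xiLogCoeff n + σ (xiLogCoeff n) = ((n : RatFunc ℚ) + 1)⁻¹ := by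
  have ht₁ : (1 + RatFunc.X ^ (2 * (n + 1)) : RatFunc ℚ) ≠ 0 :=
    RatFunc.one_add_X_pow_ne_zero (by omega)
  have ht : (RatFunc.X : RatFunc ℚ) ^ (2 * (n + 1)) ≠ 0 := pow_ne_zero _ RatFunc.X_ne_zero
  have hn : (n : RatFunc ℚ) + 1 ≠ 0 := by norm_cast
  simp only [xiLogCoeff, map_mul, map_inv₀, map_add, map_one, map_natCast, map_pow, hσ, inv_pow]
  generalize (RatFunc.X : RatFunc ℚ) ^ (2 * (n + 1)) = t at *
  have hinv : 1 + t⁻¹ = (1 + t) * t⁻¹ := by rw [add_mul, one_mul, mul_inv_cancel₀ ht, add_comm]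
  rw [hinv, mul_inv, inv_inv]
  field_simp
  ring

section psExp

/- `ratFuncPowerSeriesTopology` is definitionally the `WithPiTopology` topology for the discrete
topology on `ℚ(q)`; results stated for the latter are transported by type ascriptions. -/
local instance : TopologicalSpace (RatFunc ℚ) := ⊥
local instance : DiscreteTopology (RatFunc ℚ) := ⟨rfl⟩
local instance : T2Space (RatFunc ℚ)⟦X⟧ := WithPiTopology.instT2Space _
local instance : IsTopologicalRing (RatFunc ℚ)⟦X⟧ := WithPiTopology.instIsTopologicalRing _

variable {F G : (RatFunc ℚ)⟦X⟧}

theorem hasSum_psExp (hF : constantCoeff F = 0) :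
    HasSum (fun n : ℕ => (n.factorial : ℚ)⁻¹ • F ^ n) (psExp F) := by
  refine Summable.hasSum ?_
  refine (WithPiTopology.summable_iff_summable_coeff _).2 fun d =>
    summable_of_ne_finset_zero (s := Finset.range (d + 1)) fun n hn => ?_
  rw [Finset.mem_range, not_lt] at hn
  rw [coeff_smul, coeff_of_lt_order d
    ((Nat.cast_lt.2 (Nat.lt_of_succ_le hn)).trans_le (le_order_pow_of_constantCoeff_eq_zero n hF)),
    smul_zero]

theorem constantCoeff_psExp (hF : constantCoeff F = 0) : constantCoeff (psExp F) = 1 := by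
  have h := (hasSum_psExp hF).map constantCoeff (WithPiTopology.continuous_constantCoeff _)
  refine h.unique ((hasSum_single 0 fun n hn => ?_).trans_eq ?_)
  · simp [hF, hn]
  · simp

theorem derivative_psExp (hF : constantCoeff F = 0) :
    d⁄dX _ (psExp F) = d⁄dX _ F * psExp F := by
  have h : HasSum (fun n : ℕ => d⁄dX _ ((n.factorial : ℚ)⁻¹ • F ^ n)) (d⁄dX _ (psExp F)) :=
    WithPiTopology.hasSum_derivative (hasSum_psExp hF)
  have hterm (n : ℕ) : d⁄dX _ (((n + 1).factorial : ℚ)⁻¹ • F ^ (n + 1)) =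
      d⁄dX _ F * ((n.factorial : ℚ)⁻¹ • F ^ n) := by
    have hq : ((n + 1).factorial : ℚ)⁻¹ * (n + 1 : ℕ) = (n.factorial : ℚ)⁻¹ := by
      rw [Nat.factorial_succ, Nat.cast_mul, mul_inv, mul_comm, ← mul_assoc,
        mul_inv_cancel₀ (by positivity), one_mul]
    rw [map_rat_smul, derivative_pow, Nat.add_sub_cancel, mul_assoc, ← nsmul_eq_mul,
      ← Nat.cast_smul_eq_nsmul ℚ, smul_smul, hq, mul_smul_comm, mul_comm]
  rw [← hasSum_nat_add_iff' 1] at h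
  simp only [Finset.sum_range_one, Nat.factorial_zero, Nat.cast_one, inv_one, pow_zero, one_smul,
    derivative_one, sub_zero, hterm] at h
  exact h.unique ((hasSum_psExp hF).mul_left _)

theorem eq_psExp_of_derivative_eq_mul {E : (RatFunc ℚ)⟦X⟧} (hF : constantCoeff F = 0)
    (hE₀ : constantCoeff E = 1) (hE : d⁄dX _ E = d⁄dX _ F * E) : E = psExp F :=
  eq_of_derivative_eq_mul_self hE (derivative_psExp hF)
    (by rw [hE₀, constantCoeff_psExp hF]) (by simp [constantCoeff_psExp hF])

theorem psExp_add (hF : constantCoeff F = 0) (hG : constantCoeff G = 0) :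
    psExp (F + G) = psExp F * psExp G := by
  refine (eq_psExp_of_derivative_eq_mul (by simp [hF, hG]) ?_ ?_).symm
  · simp [constantCoeff_psExp hF, constantCoeff_psExp hG]
  · rw [Derivation.leibniz, derivative_psExp hF, derivative_psExp hG, map_add, smul_eq_mul,
      smul_eq_mul]
    ring

theorem map_psExp (f : RatFunc ℚ →+* RatFunc ℚ) (hF : constantCoeff F = 0) :
    map f (psExp F) = psExp (map f F) := by
  refine eq_psExp_of_derivative_eq_mul (by simp [hF]) (by simp [constantCoeff_psExp hF]) ?_
  rw [derivative_map, derivative_map, derivative_psExp hF, map_mul]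

theorem psExp_neg_X_mul_mk_inv_succ :
    psExp (-(X * mk fun n => ((n : RatFunc ℚ) + 1)⁻¹)) = 1 - X := by
  have hL : d⁄dX _ (-(X * mk fun n => ((n : RatFunc ℚ) + 1)⁻¹)) = -mk 1 := by
    ext n
    rw [map_neg, map_neg, map_neg, coeff_derivative, coeff_succ_X_mul, coeff_mk, coeff_mk,
      Pi.one_apply, inv_mul_cancel₀ (by norm_cast)]
  refine (eq_psExp_of_derivative_eq_mul (by simp) (by simp) ?_).symm
  rw [hL, neg_mul, mk_one_mul_one_sub_eq_one, map_sub, derivative_one, derivative_X, zero_sub]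

theorem xiSeries_eq_psExp : xiSeries = psExp (-(X * mk xiLogCoeff)) := by
  have h : HasSum (fun n => C (xiLogCoeff n) * X ^ (n + 1)) (X * mk xiLogCoeff) :=
    WithPiTopology.hasSum_C_mul_X_pow_succ xiLogCoeff
  rw [xiSeries, ← h.tsum_eq]
  rfl

end psExp

/-- Let `bar` be the (unique) `ℚ`-algebra endomorphism of `K = ℚ(q)` with
`q ↦ q⁻¹`, extended coefficientwise to `K[[z]]`.  Then
`ξ(z) · bar(ξ(z)) = 1 − z`, i.e. `bar(ξ(z)) = (1 − z)/ξ(z)`. -/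
theorem xi_mul_bar_xi (bar : RatFunc ℚ →ₐ[ℚ] RatFunc ℚ)
    (hbar : bar RatFunc.X = RatFunc.X⁻¹) :
    xiSeries * PowerSeries.map bar.toRingHom xiSeries = 1 - PowerSeries.X := by
  have hA : constantCoeff (-(X * mk xiLogCoeff)) = 0 := by simp
  have hlog : -(X * mk xiLogCoeff) + map bar.toRingHom (-(X * mk xiLogCoeff)) =
      -(X * mk fun n => ((n : RatFunc ℚ) + 1)⁻¹) := by
    ext (_ | n)
    · simp
    · simp [coeff_succ_X_mul, ← xiLogCoeff_add_map bar.toRingHom hbar, add_comm]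
  rw [xiSeries_eq_psExp, map_psExp _ hA, ← psExp_add hA (by simp), hlog,
    psExp_neg_X_mul_mk_inv_succ]
end

section
/- In the ring ℚ[[q,t,z]] of formal power series in three variables over ℚ, equipped with the coefficientwise (product) topology, the following identity holds: exp( Σ_{n ≥ 1} (1/n) · (1 − tⁿ)·(1 − qⁿ)^{−1} · zⁿ ) = ∏_{k ≥ 0} (1 − t q^k z)·(1 − q^k z)^{−1}, where the infinite product converges coefficientwise. -/
open MvPowerSeries Finset Filter

/-- The coefficientwise (product) topology on `ℚ[[q,t,z]]`: the product topology on the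
coefficient functions, with each (discrete) coefficient space `ℚ`. -/
noncomputable instance ratMvPowerSeriesTopology3 :
    TopologicalSpace (MvPowerSeries (Fin 3) ℚ) :=
  @Pi.topologicalSpace ((Fin 3) →₀ ℕ) (fun _ => ℚ) (fun _ => ⊥)

/-- The exponential of a formal power series, `exp F = ∑_{n ≥ 0} Fⁿ/n!`, defined as an
infinite sum in the coefficientwise topology. -/
noncomputable def mvExp3 (F : MvPowerSeries (Fin 3) ℚ) : MvPowerSeries (Fin 3) ℚ :=
  ∑' n : ℕ, (n.factorial : ℚ)⁻¹ • F ^ n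

abbrev R3 : Type := MvPowerSeries (Fin 3) ℚ

instance : T2Space (MvPowerSeries (Fin 3) ℚ) := by
  letI : TopologicalSpace ℚ := ⊥
  haveI : DiscreteTopology ℚ := ⟨rfl⟩
  exact Pi.t2Space

lemma tendsto_coeffwise {α : Type*} {l : Filter α} {F : α → R3} {S : R3}
    (h : ∀ d, ∀ᶠ x in l, coeff d (F x) = coeff d S) :
    Filter.Tendsto F l (nhds S) := by
  refine (tendsto_pi_nhds (T := fun _ => (⊥ : TopologicalSpace ℚ))).2 ?_
  intro d
  exact Filter.Tendsto.congr' ((h d).mono fun x hx => hx.symm)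
    (@tendsto_const_nhds ℚ ⊥ α (coeff d S) l)

noncomputable def glueS {ι : Type*} (f : ι → R3) (s : (Fin 3 →₀ ℕ) → Finset ι) : R3 :=
  fun d => ∑ i ∈ s d, coeff d (f i)

lemma coeff_glueS {ι : Type*} (f : ι → R3) (s : (Fin 3 →₀ ℕ) → Finset ι) (d) :
    coeff d (glueS f s) = ∑ i ∈ s d, coeff d (f i) := rfl

lemma hasSum_glueS {ι : Type*} (f : ι → R3) (s : (Fin 3 →₀ ℕ) → Finset ι)
    (h : ∀ d i, i ∉ s d → coeff d (f i) = 0) : HasSum f (glueS f s) := by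
  apply tendsto_coeffwise
  intro d
  filter_upwards [Filter.eventually_ge_atTop (s d)] with t ht
  rw [map_sum, coeff_glueS]
  exact (Finset.sum_subset ht fun i _ hi => h d i hi).symm

noncomputable def Dz (F : R3) : R3 := fun d => (d 2 : ℚ) * coeff d F

lemma coeff_Dz (F : R3) (d) : coeff d (Dz F) = (d 2 : ℚ) * coeff d F := rfl

lemma fin3_apply_add (a b : Fin 3 →₀ ℕ) (i : Fin 3) : (a + b) i = a i + b i :=
  Finsupp.add_apply a b i

lemma Dz_mul (F G : R3) : Dz (F * G) = Dz F * G + F * Dz G := by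
  ext d
  rw [map_add, coeff_Dz, coeff_mul, coeff_mul, coeff_mul, Finset.mul_sum,
    ← Finset.sum_add_distrib]
  refine Finset.sum_congr rfl fun p hp => ?_
  rw [Finset.HasAntidiagonal.mem_antidiagonal] at hp
  rw [coeff_Dz, coeff_Dz]
  have h2 : d 2 = p.1 2 + p.2 2 := by rw [← hp, fin3_apply_add]
  rw [h2]
  push_cast
  ring

lemma Dz_add (F G : R3) : Dz (F + G) = Dz F + Dz G := by
  ext d; rw [map_add, coeff_Dz, map_add, coeff_Dz, coeff_Dz]; ring

lemma Dz_sub (F G : R3) : Dz (F - G) = Dz F - Dz G := by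
  ext d; rw [map_sub, coeff_Dz, map_sub, coeff_Dz, coeff_Dz]; ring

lemma Dz_smul (c : ℚ) (F : R3) : Dz (c • F) = c • Dz F := by
  ext d; rw [coeff_Dz, coeff_smul, coeff_smul, coeff_Dz]; ring

lemma Dz_one : Dz (1 : R3) = 0 := by
  ext d
  rw [coeff_Dz, map_zero, coeff_one]
  split
  · next h => subst h; simp
  · ring

/-- "z-order ≥ 1" -/
def Zo (F : R3) : Prop := ∀ e : Fin 3 →₀ ℕ, e 2 = 0 → coeff e F = 0

lemma Zo_Dz (F : R3) : Zo (Dz F) := fun e he => by rw [coeff_Dz, he]; simp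

lemma Zo.add {F G : R3} (hF : Zo F) (hG : Zo G) : Zo (F + G) := fun e he => by
  rw [map_add, hF e he, hG e he, add_zero]

lemma Zo.sub {F G : R3} (hF : Zo F) (hG : Zo G) : Zo (F - G) := fun e he => by
  rw [map_sub, hF e he, hG e he, sub_zero]

lemma Zo.neg {F : R3} (hF : Zo F) : Zo (-F) := fun e he => by
  rw [map_neg, hF e he, neg_zero]

lemma Zo.zero : Zo (0 : R3) := fun e _ => by rw [map_zero]

lemma Zo.finsum {ι : Type*} {s : Finset ι} {f : ι → R3} (h : ∀ i ∈ s, Zo (f i)) :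
    Zo (∑ i ∈ s, f i) := fun e he => by
  rw [map_sum]
  exact Finset.sum_eq_zero fun i hi => h i hi e he

lemma coeff_pow_zo {A : R3} (hA : Zo A) :
    ∀ (n : ℕ) (d : Fin 3 →₀ ℕ), d 2 < n → coeff d (A ^ n) = 0 := by
  intro n
  induction n with
  | zero => intro d hd; omega
  | succ n ih =>
    intro d hd
    rw [pow_succ, coeff_mul]
    refine Finset.sum_eq_zero fun p hp => ?_
    rw [Finset.HasAntidiagonal.mem_antidiagonal] at hp
    have h2 : p.1 2 + p.2 2 = d 2 := by rw [← hp, fin3_apply_add]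
    by_cases h : p.2 2 = 0
    · rw [hA p.2 h, mul_zero]
    · rw [ih p.1 (by omega), zero_mul]

/-- agreement of coefficients below `d` -/
def Below (d : Fin 3 →₀ ℕ) (F G : R3) : Prop := ∀ e ≤ d, coeff e F = coeff e G

lemma Below.refl (d : Fin 3 →₀ ℕ) (F : R3) : Below d F F := fun _ _ => rfl

lemma Below.mul {d : Fin 3 →₀ ℕ} {F F' G G' : R3} (hF : Below d F F') (hG : Below d G G') :
    Below d (F * G) (F' * G') := by
  intro e he
  rw [coeff_mul, coeff_mul]
  refine Finset.sum_congr rfl fun p hp => ?_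
  rw [Finset.HasAntidiagonal.mem_antidiagonal] at hp
  have h1 : p.1 ≤ d := le_trans (hp ▸ le_self_add) he
  have h2 : p.2 ≤ d := le_trans (hp ▸ le_add_self) he
  rw [hF p.1 h1, hG p.2 h2]

lemma Below.pow {d : Fin 3 →₀ ℕ} {F G : R3} (h : Below d F G) (n : ℕ) :
    Below d (F ^ n) (G ^ n) := by
  induction n with
  | zero => exact Below.refl d 1
  | succ n ih => rw [pow_succ, pow_succ]; exact ih.mul h

noncomputable def mvExp3' (F : MvPowerSeries (Fin 3) ℚ) : MvPowerSeries (Fin 3) ℚ :=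
  ∑' n : ℕ, (n.factorial : ℚ)⁻¹ • F ^ n

lemma hasSum_exp {A : R3} (hA : Zo A) :
    HasSum (fun n : ℕ => (n.factorial : ℚ)⁻¹ • A ^ n)
      (glueS (fun n : ℕ => (n.factorial : ℚ)⁻¹ • A ^ n) (fun d => Finset.range (d 2 + 1))) := by
  refine hasSum_glueS _ _ fun d n hn => ?_
  rw [Finset.mem_range] at hn
  rw [coeff_smul, coeff_pow_zo hA n d (by omega), mul_zero]

lemma coeff_mvExp3 {A : R3} (hA : Zo A) (d : Fin 3 →₀ ℕ) :
    coeff d (mvExp3' A) =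
      ∑ n ∈ Finset.range (d 2 + 1), (n.factorial : ℚ)⁻¹ * coeff d (A ^ n) := by
  rw [mvExp3', (hasSum_exp hA).tsum_eq, coeff_glueS]
  exact Finset.sum_congr rfl fun n _ => coeff_smul _ _ _

lemma Below.exp {d : Fin 3 →₀ ℕ} {A B : R3} (hA : Zo A) (hB : Zo B) (h : Below d A B) :
    Below d (mvExp3' A) (mvExp3' B) := by
  intro e he
  rw [coeff_mvExp3 hA, coeff_mvExp3 hB]
  refine Finset.sum_congr rfl fun n _ => ?_
  have := (h.pow n) e he
  rw [this]

lemma coeff_exp_z0 {A : R3} (hA : Zo A) {e : Fin 3 →₀ ℕ} (he : e 2 = 0) :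
    coeff e (mvExp3' A) = coeff e 1 := by
  rw [coeff_mvExp3 hA, he]
  simp [pow_zero]

lemma Dz_zero : Dz (0 : R3) = 0 := by
  ext d; rw [coeff_Dz, map_zero, mul_zero]

lemma Dz_sum {ι : Type*} [DecidableEq ι] (s : Finset ι) (f : ι → R3) :
    Dz (∑ i ∈ s, f i) = ∑ i ∈ s, Dz (f i) := by
  induction s using Finset.induction with
  | empty => simpa using Dz_zero
  | insert a t h ih => rw [Finset.sum_insert h, Finset.sum_insert h, Dz_add, ih]

lemma Dz_pow (A : R3) (n : ℕ) : Dz (A ^ (n + 1)) = (n + 1 : ℚ) • (A ^ n * Dz A) := by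
  induction n with
  | zero => simp [Dz_mul, Dz_one, pow_one]
  | succ n ih =>
    rw [pow_succ (n := n + 1), Dz_mul, ih, smul_mul_assoc, mul_assoc, mul_comm (Dz A) A,
      ← mul_assoc, ← pow_succ]
    push_cast
    module

lemma Dz_exp {A : R3} (hA : Zo A) : Dz (mvExp3' A) = Dz A * mvExp3' A := by
  ext d
  set N := d 2 with hN
  set S : R3 := ∑ n ∈ Finset.range (N + 1), (n.factorial : ℚ)⁻¹ • A ^ n with hS
  have hbel : Below d (mvExp3' A) S := by
    intro e he
    rw [coeff_mvExp3 hA, hS, map_sum]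
    have hsub : Finset.range (e 2 + 1) ⊆ Finset.range (N + 1) := by
      apply Finset.range_subset_range.2
      have : e 2 ≤ d 2 := he 2
      omega
    rw [show (∑ n ∈ Finset.range (N + 1), coeff e ((n.factorial : ℚ)⁻¹ • A ^ n))
        = ∑ n ∈ Finset.range (N + 1), (n.factorial : ℚ)⁻¹ * coeff e (A ^ n) from
        Finset.sum_congr rfl fun n _ => coeff_smul _ _ _]
    refine Finset.sum_subset hsub fun n _ hn => ?_
    rw [Finset.mem_range] at hn
    rw [coeff_pow_zo hA n e (by omega), mul_zero]
  have h1 : coeff d (Dz (mvExp3' A)) = coeff d (Dz S) := by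
    rw [coeff_Dz, coeff_Dz, hbel d le_rfl]
  have h2 : coeff d (Dz A * mvExp3' A) = coeff d (Dz A * S) :=
    (Below.mul (Below.refl d (Dz A)) hbel) d le_rfl
  rw [h1, h2]
  have hDzS : Dz S = Dz A * ∑ n ∈ Finset.range N, (n.factorial : ℚ)⁻¹ • A ^ n := by
    rw [hS]
    have hlin : Dz (∑ n ∈ Finset.range (N + 1), (n.factorial : ℚ)⁻¹ • A ^ n)
        = ∑ n ∈ Finset.range (N + 1), (n.factorial : ℚ)⁻¹ • Dz (A ^ n) := by
      rw [Dz_sum]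
      exact Finset.sum_congr rfl fun n _ => Dz_smul _ _
    rw [hlin, Finset.sum_range_succ']
    have h0 : (Nat.factorial 0 : ℚ)⁻¹ • Dz (A ^ 0) = 0 := by
      simp [Dz_one]
    rw [h0, add_zero, Finset.mul_sum]
    refine Finset.sum_congr rfl fun n _ => ?_
    rw [Dz_pow, Nat.factorial_succ, smul_smul]
    push_cast
    have hc : (((n : ℚ) + 1) * n.factorial)⁻¹ * ((n : ℚ) + 1) = (n.factorial : ℚ)⁻¹ := by
      have h1 : ((n : ℚ) + 1) ≠ 0 := by positivity
      have h2 : (n.factorial : ℚ) ≠ 0 := Nat.cast_ne_zero.2 n.factorial_ne_zero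
      field_simp
    rw [hc, mul_smul_comm, mul_comm (Dz A)]
  rw [hDzS]
  rw [hS, Finset.sum_range_succ, mul_add, map_add]
  have hz : coeff d (Dz A * ((N.factorial : ℚ)⁻¹ • A ^ N)) = 0 := by
    rw [coeff_mul]
    refine Finset.sum_eq_zero fun p hp => ?_
    rw [Finset.HasAntidiagonal.mem_antidiagonal] at hp
    have h2' : p.1 2 + p.2 2 = d 2 := by rw [← hp, fin3_apply_add]
    by_cases h : p.1 2 = 0
    · rw [Zo_Dz A p.1 h, zero_mul]
    · rw [coeff_smul, coeff_pow_zo hA N p.2 (by omega), mul_zero, mul_zero]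
  rw [hz, add_zero]

lemma eq_zero_of_Dz_eq {W H : R3} (hW : Zo W) (hH0 : ∀ e : Fin 3 →₀ ℕ, e 2 = 0 → coeff e H = 0)
    (hD : Dz H = W * H) : H = 0 := by
  have key : ∀ (m : ℕ) (d : Fin 3 →₀ ℕ), d 2 = m → coeff d H = 0 := by
    intro m
    induction m using Nat.strong_induction_on with
    | _ m ih =>
      intro d hd
      rcases Nat.eq_zero_or_pos m with h0 | hpos
      · exact hH0 d (by omega)
      · have hc : (d 2 : ℚ) * coeff d H = coeff d (W * H) := by
          rw [← coeff_Dz, hD]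
        rw [coeff_mul] at hc
        have hz : ∀ p ∈ antidiagonal d, coeff p.1 W * coeff p.2 H = 0 := by
          intro p hp
          rw [Finset.HasAntidiagonal.mem_antidiagonal] at hp
          have h2 : p.1 2 + p.2 2 = d 2 := by rw [← hp, fin3_apply_add]
          by_cases h1 : p.1 2 = 0
          · rw [hW p.1 h1, zero_mul]
          · rw [ih (p.2 2) (by omega) p.2 rfl, mul_zero]
        rw [Finset.sum_eq_zero hz] at hc
        have hm : (d 2 : ℚ) ≠ 0 := by
          rw [hd]; exact_mod_cast Nat.pos_iff_ne_zero.1 hpos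
        exact (mul_eq_zero.1 hc).resolve_left hm
  ext d
  rw [map_zero]
  exact key (d 2) d rfl

lemma mvExp3'_zero : mvExp3' (0 : R3) = 1 := by
  ext d
  rw [coeff_mvExp3 Zo.zero d, Finset.sum_eq_single 0]
  · simp
  · intro n _ hn
    rw [zero_pow hn, map_zero, mul_zero]
  · intro h
    exact absurd (Finset.mem_range.2 (by omega)) h

lemma mvExp3'_add {A B : R3} (hA : Zo A) (hB : Zo B) :
    mvExp3' (A + B) = mvExp3' A * mvExp3' B := by
  have hAB : Zo (A + B) := hA.add hB
  set H : R3 := mvExp3' (A + B) - mvExp3' A * mvExp3' B with hH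
  have hDH : Dz H = Dz (A + B) * H := by
    rw [hH, Dz_sub, Dz_exp hAB, Dz_mul, Dz_exp hA, Dz_exp hB, Dz_add]
    ring
  have hH0 : ∀ e : Fin 3 →₀ ℕ, e 2 = 0 → coeff e H = 0 := by
    intro e he
    rw [hH, map_sub, coeff_exp_z0 hAB he]
    have : coeff e (mvExp3' A * mvExp3' B) = coeff e ((1 : R3) * 1) := by
      rw [coeff_mul, coeff_mul]
      refine Finset.sum_congr rfl fun p hp => ?_
      rw [Finset.HasAntidiagonal.mem_antidiagonal] at hp
      have h2 : p.1 2 + p.2 2 = e 2 := by rw [← hp, fin3_apply_add]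
      rw [coeff_exp_z0 hA (by omega), coeff_exp_z0 hB (by omega)]
    rw [this, one_mul, sub_eq_zero]
  have := eq_zero_of_Dz_eq (Zo_Dz (A + B)) hH0 hDH
  rw [hH, sub_eq_zero] at this
  exact this

/-- homogeneous of z-degree exactly 1 -/
def Hom1 (u : R3) : Prop := ∀ e : Fin 3 →₀ ℕ, e 2 ≠ 1 → coeff e u = 0

lemma Hom1.zo {u : R3} (hu : Hom1 u) : Zo u := fun e he => hu e (by omega)

lemma hom_pow {u : R3} (hu : Hom1 u) :
    ∀ (n : ℕ) (e : Fin 3 →₀ ℕ), e 2 ≠ n → coeff e (u ^ n) = 0 := by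
  intro n
  induction n with
  | zero =>
    intro e he
    rw [pow_zero, coeff_one, if_neg]
    intro h
    exact he (by rw [h]; simp)
  | succ n ih =>
    intro e he
    rw [pow_succ, coeff_mul]
    refine Finset.sum_eq_zero fun p hp => ?_
    rw [Finset.HasAntidiagonal.mem_antidiagonal] at hp
    have h2 : p.1 2 + p.2 2 = e 2 := by rw [← hp, fin3_apply_add]
    by_cases hq : p.2 2 = 1
    · rw [ih p.1 (by omega), zero_mul]
    · rw [hu p.2 hq, mul_zero]

noncomputable def Lam (u : R3) : R3 :=
  fun e => if e 2 = 0 then 0 else ((e 2 : ℚ))⁻¹ * coeff e (u ^ (e 2))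

noncomputable def Geom1 (u : R3) : R3 :=
  fun e => if e 2 = 0 then 0 else coeff e (u ^ (e 2))

lemma coeff_Lam (u : R3) (e : Fin 3 →₀ ℕ) :
    coeff e (Lam u) = if e 2 = 0 then 0 else ((e 2 : ℚ))⁻¹ * coeff e (u ^ (e 2)) := rfl

lemma coeff_Geom1 (u : R3) (e : Fin 3 →₀ ℕ) :
    coeff e (Geom1 u) = if e 2 = 0 then 0 else coeff e (u ^ (e 2)) := rfl

lemma Zo_Lam (u : R3) : Zo (Lam u) := fun e he => by rw [coeff_Lam, if_pos he]

lemma Zo_Geom1 (u : R3) : Zo (Geom1 u) := fun e he => by rw [coeff_Geom1, if_pos he]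

lemma Dz_Lam (u : R3) : Dz (Lam u) = Geom1 u := by
  ext e
  rw [coeff_Dz, coeff_Lam, coeff_Geom1]
  by_cases h : e 2 = 0
  · rw [if_pos h, if_pos h, mul_zero]
  · rw [if_neg h, if_neg h, ← mul_assoc, mul_inv_cancel₀ (by exact_mod_cast h), one_mul]

lemma Dz_hom1 {u : R3} (hu : Hom1 u) : Dz u = u := by
  ext e
  rw [coeff_Dz]
  by_cases h : e 2 = 1
  · rw [h]; push_cast; rw [one_mul]
  · rw [hu e h, mul_zero]

lemma coeff_u_mul_Geom1 {u : R3} (hu : Hom1 u) (e : Fin 3 →₀ ℕ) :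
    coeff e (u * Geom1 u) = if e 2 = 0 ∨ e 2 = 1 then 0 else coeff e (u ^ (e 2)) := by
  by_cases h01 : e 2 = 0 ∨ e 2 = 1
  · rw [if_pos h01, coeff_mul]
    refine Finset.sum_eq_zero fun p hp => ?_
    rw [Finset.HasAntidiagonal.mem_antidiagonal] at hp
    have h2 : p.1 2 + p.2 2 = e 2 := by rw [← hp, fin3_apply_add]
    by_cases hq : p.1 2 = 1
    · rw [coeff_Geom1, if_pos (by omega), mul_zero]
    · rw [hu p.1 hq, zero_mul]
  · rw [if_neg h01]
    push_neg at h01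
    obtain ⟨h0, h1⟩ := h01
    have hm : e 2 = (e 2 - 1) + 1 := by omega
    rw [show u ^ (e 2) = u * u ^ (e 2 - 1) by rw [← pow_succ', ← hm]]
    rw [coeff_mul, coeff_mul]
    refine Finset.sum_congr rfl fun p hp => ?_
    rw [Finset.HasAntidiagonal.mem_antidiagonal] at hp
    have h2 : p.1 2 + p.2 2 = e 2 := by rw [← hp, fin3_apply_add]
    by_cases hq : p.1 2 = 1
    · have hne : ¬ (p.2 2 = 0) := by omega
      have h22 : p.2 2 = e 2 - 1 := by omega
      rw [coeff_Geom1, if_neg hne, h22]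
    · rw [hu p.1 hq, zero_mul, zero_mul]

lemma geom_mul {u : R3} (hu : Hom1 u) : (1 - u) * Geom1 u = u := by
  ext e
  rw [sub_mul, one_mul, map_sub, coeff_Geom1, coeff_u_mul_Geom1 hu]
  by_cases h0 : e 2 = 0
  · rw [if_pos h0, if_pos (Or.inl h0), hu.zo e h0, sub_zero]
  · by_cases h1 : e 2 = 1
    · rw [if_neg h0, if_pos (Or.inr h1), h1, pow_one, sub_zero]
    · rw [if_neg h0, if_neg (by tauto), hu e h1, sub_self]

lemma exp_lam_mul {u : R3} (hu : Hom1 u) : mvExp3' (Lam u) * (1 - u) = 1 := by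
  set E := mvExp3' (Lam u) with hE
  set H : R3 := E * (1 - u) - 1 with hH
  have hDH : Dz H = 0 := by
    rw [hH, Dz_sub, Dz_one, Dz_mul, Dz_exp (Zo_Lam u), Dz_Lam, Dz_sub, Dz_one, Dz_hom1 hu]
    linear_combination E * geom_mul hu
  have hH0 : ∀ e : Fin 3 →₀ ℕ, e 2 = 0 → coeff e H = 0 := by
    intro e he
    rw [hH, map_sub]
    have : coeff e (E * (1 - u)) = coeff e ((1 : R3) * 1) := by
      rw [coeff_mul, coeff_mul]
      refine Finset.sum_congr rfl fun p hp => ?_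
      rw [Finset.HasAntidiagonal.mem_antidiagonal] at hp
      have h2 : p.1 2 + p.2 2 = e 2 := by rw [← hp, fin3_apply_add]
      have hp1 : p.1 2 = 0 := by omega
      have hp2 : p.2 2 = 0 := by omega
      rw [hE, coeff_exp_z0 (Zo_Lam u) hp1, map_sub, hu.zo p.2 hp2, sub_zero]
    rw [this, one_mul, sub_eq_zero]
  have hz := eq_zero_of_Dz_eq Zo.zero hH0 (by rw [hDH, zero_mul])
  rw [hH, sub_eq_zero] at hz
  exact hz

lemma constantCoeff_hom1 {u : R3} (hu : Hom1 u) : constantCoeff u = 0 := by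
  rw [← coeff_zero_eq_constantCoeff_apply]
  exact hu 0 (by simp)

lemma one_sub_inv_eq_exp {u : R3} (hu : Hom1 u) : (1 - u)⁻¹ = mvExp3' (Lam u) := by
  rw [MvPowerSeries.inv_eq_iff_mul_eq_one]
  · exact exp_lam_mul hu
  · rw [map_sub, map_one, constantCoeff_hom1 hu, sub_zero]
    exact one_ne_zero

lemma one_sub_eq_exp_neg {u : R3} (hu : Hom1 u) : (1 - u) = mvExp3' (-(Lam u)) := by
  have h1 : mvExp3' (-(Lam u)) * mvExp3' (Lam u) = 1 := by
    rw [← mvExp3'_add (Zo_Lam u).neg (Zo_Lam u), neg_add_cancel, mvExp3'_zero]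
  calc (1 - u) = (mvExp3' (-(Lam u)) * mvExp3' (Lam u)) * (1 - u) := by rw [h1, one_mul]
    _ = mvExp3' (-(Lam u)) * (mvExp3' (Lam u) * (1 - u)) := by ring
    _ = mvExp3' (-(Lam u)) := by rw [exp_lam_mul hu, mul_one]

lemma fin3_eq_iff {e f : Fin 3 →₀ ℕ} : e = f ↔ e 0 = f 0 ∧ e 1 = f 1 ∧ e 2 = f 2 := by
  constructor
  · rintro rfl; exact ⟨rfl, rfl, rfl⟩
  · rintro ⟨a, b, c⟩
    refine Finsupp.ext fun i => ?_
    match i with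
    | 0 => exact a
    | 1 => exact b
    | 2 => exact c

/-- the geometric series `∑_k q^{mk}` -/
noncomputable def GeoQ (m : ℕ) : R3 :=
  fun e => if e 1 = 0 ∧ e 2 = 0 ∧ m ∣ e 0 then 1 else 0

lemma coeff_GeoQ (m : ℕ) (e : Fin 3 →₀ ℕ) :
    coeff e (GeoQ m) = if e 1 = 0 ∧ e 2 = 0 ∧ m ∣ e 0 then 1 else 0 := rfl

lemma GeoQ_mul (m : ℕ) (hm : 1 ≤ m) : GeoQ m * (1 - (X 0 : R3) ^ m) = 1 := by
  ext e
  rw [mul_sub, mul_one, map_sub, X_pow_eq, coeff_mul_monomial, coeff_GeoQ, coeff_one, mul_one]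
  have hle : Finsupp.single (0 : Fin 3) m ≤ e ↔ m ≤ e 0 := Finsupp.single_le_iff
  have he0 : (e - Finsupp.single (0 : Fin 3) m) 0 = e 0 - m := by
    rw [Finsupp.tsub_apply, Finsupp.single_eq_same]
  have he1 : (e - Finsupp.single (0 : Fin 3) m) 1 = e 1 := by
    rw [Finsupp.tsub_apply, Finsupp.single_eq_of_ne (by decide), Nat.sub_zero]
  have he2 : (e - Finsupp.single (0 : Fin 3) m) 2 = e 2 := by
    rw [Finsupp.tsub_apply, Finsupp.single_eq_of_ne (by decide), Nat.sub_zero]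
  have hez : (e = 0) ↔ (e 0 = 0 ∧ e 1 = 0 ∧ e 2 = 0) := by
    rw [fin3_eq_iff]; simp
  have hsnd : (if Finsupp.single (0 : Fin 3) m ≤ e
        then coeff (e - Finsupp.single (0 : Fin 3) m) (GeoQ m) else 0)
      = if e 1 = 0 ∧ e 2 = 0 ∧ m ≤ e 0 ∧ m ∣ e 0 - m then (1 : ℚ) else 0 := by
    by_cases hle' : Finsupp.single (0 : Fin 3) m ≤ e
    · rw [if_pos hle', coeff_GeoQ, he0, he1, he2]
      have hmle := hle.1 hle'
      by_cases hc : e 1 = 0 ∧ e 2 = 0 ∧ m ∣ e 0 - m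
      · rw [if_pos hc, if_pos ⟨hc.1, hc.2.1, hmle, hc.2.2⟩]
      · rw [if_neg hc, if_neg (by tauto)]
    · rw [if_neg hle', if_neg (fun hc => hle' (hle.2 hc.2.2.1))]
  rw [hsnd]
  by_cases h1 : e 1 = 0
  · by_cases h2 : e 2 = 0
    · by_cases hd : m ∣ e 0
      · by_cases h0 : e 0 = 0
        · rw [if_pos ⟨h1, h2, hd⟩, if_neg (fun hc => absurd hc.2.2.1 (by omega)),
            if_pos (hez.2 ⟨h0, h1, h2⟩), sub_zero]
        · rw [if_pos ⟨h1, h2, hd⟩,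
            if_pos ⟨h1, h2, Nat.le_of_dvd (by omega) hd, Nat.dvd_sub hd dvd_rfl⟩,
            if_neg (fun hc => h0 (hez.1 hc).1), sub_self]
      · have hnc2 : ¬(e 1 = 0 ∧ e 2 = 0 ∧ m ≤ e 0 ∧ m ∣ e 0 - m) := by
          rintro ⟨-, -, hle3, hd'⟩
          refine hd ?_
          have hs : e 0 = (e 0 - m) + m := by omega
          rw [hs]
          exact Nat.dvd_add hd' dvd_rfl
        rw [if_neg (by tauto), if_neg hnc2,
          if_neg (fun hc => hd (((hez.1 hc).1) ▸ dvd_zero m)), sub_zero]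
    · rw [if_neg (by tauto), if_neg (by tauto), if_neg (fun hc => h2 (hez.1 hc).2.2), sub_zero]
  · rw [if_neg (by tauto), if_neg (by tauto), if_neg (fun hc => h1 (hez.1 hc).2.1), sub_zero]

lemma inv_one_sub_qpow (n : ℕ) : ((1 : R3) - (X 0) ^ (n + 1))⁻¹ = GeoQ (n + 1) := by
  rw [MvPowerSeries.inv_eq_iff_mul_eq_one]
  · exact GeoQ_mul (n + 1) (by omega)
  · rw [map_sub, map_one, map_pow, constantCoeff_X, zero_pow (by omega), sub_zero]
    exact one_ne_zero

lemma sub_single2_apply (e : Fin 3 →₀ ℕ) (m : ℕ) :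
    (e - Finsupp.single (2 : Fin 3) m) 0 = e 0 ∧ (e - Finsupp.single (2 : Fin 3) m) 1 = e 1 ∧
      (e - Finsupp.single (2 : Fin 3) m) 2 = e 2 - m := by
  refine ⟨?_, ?_, ?_⟩
  · rw [Finsupp.tsub_apply, Finsupp.single_eq_of_ne (by decide), Nat.sub_zero]
  · rw [Finsupp.tsub_apply, Finsupp.single_eq_of_ne (by decide), Nat.sub_zero]
  · rw [Finsupp.tsub_apply, Finsupp.single_eq_same]

lemma sub_single1_apply (e : Fin 3 →₀ ℕ) (m : ℕ) :
    (e - Finsupp.single (1 : Fin 3) m) 0 = e 0 ∧ (e - Finsupp.single (1 : Fin 3) m) 1 = e 1 - m ∧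
      (e - Finsupp.single (1 : Fin 3) m) 2 = e 2 := by
  refine ⟨?_, ?_, ?_⟩
  · rw [Finsupp.tsub_apply, Finsupp.single_eq_of_ne (by decide), Nat.sub_zero]
  · rw [Finsupp.tsub_apply, Finsupp.single_eq_same]
  · rw [Finsupp.tsub_apply, Finsupp.single_eq_of_ne (by decide), Nat.sub_zero]

lemma coeff_B_z (m : ℕ) (f : Fin 3 →₀ ℕ) (hf2 : f 2 ≠ 0) :
    coeff f ((1 - (X 1 : R3) ^ m) * GeoQ m) = 0 := by
  rw [sub_mul, one_mul, map_sub, coeff_GeoQ, if_neg (by tauto), X_pow_eq, coeff_monomial_mul]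
  by_cases hle : Finsupp.single (1 : Fin 3) m ≤ f
  · rw [if_pos hle, coeff_GeoQ, if_neg (by
      rintro ⟨-, hc, -⟩
      rw [(sub_single1_apply f m).2.2] at hc
      exact hf2 hc), mul_zero, sub_zero]
  · rw [if_neg hle, sub_zero]

lemma coeff_B (m : ℕ) (hm : 1 ≤ m) (f : Fin 3 →₀ ℕ) (hf2 : f 2 = 0) :
    coeff f ((1 - (X 1 : R3) ^ m) * GeoQ m)
      = (if f 1 = 0 ∧ m ∣ f 0 then (1 : ℚ) else 0) -
        (if f 1 = m ∧ m ∣ f 0 then (1 : ℚ) else 0) := by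
  rw [sub_mul, one_mul, map_sub, coeff_GeoQ, X_pow_eq, coeff_monomial_mul]
  obtain ⟨hg0, hg1, hg2⟩ := sub_single1_apply f m
  congr 1
  · by_cases hc : f 1 = 0 ∧ m ∣ f 0
    · rw [if_pos ⟨hc.1, hf2, hc.2⟩, if_pos hc]
    · rw [if_neg (by tauto), if_neg hc]
  · by_cases hle : Finsupp.single (1 : Fin 3) m ≤ f
    · have hm1 : m ≤ f 1 := Finsupp.single_le_iff.1 hle
      rw [if_pos hle, one_mul, coeff_GeoQ, hg0, hg1, hg2, hf2]
      by_cases hc : f 1 = m ∧ m ∣ f 0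
      · rw [if_pos ⟨by omega, rfl, hc.2⟩, if_pos hc]
      · rw [if_neg (by
          rintro ⟨ha, -, hb⟩
          exact hc ⟨by omega, hb⟩), if_neg hc]
    · have hm1 : ¬ m ≤ f 1 := fun hc => hle (Finsupp.single_le_iff.2 hc)
      rw [if_neg hle, if_neg (fun hc => hm1 (by omega))]

noncomputable def aS (n : ℕ) : R3 :=
  ((n + 1 : ℚ))⁻¹ • ((1 - (X 1 : MvPowerSeries (Fin 3) ℚ) ^ (n + 1)) *
    (1 - (X 0) ^ (n + 1))⁻¹ * (X 2) ^ (n + 1))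

lemma aS_eq (n : ℕ) : aS n =
    ((n + 1 : ℚ))⁻¹ • ((1 - (X 1 : R3) ^ (n + 1)) * GeoQ (n + 1) * (X 2) ^ (n + 1)) := by
  rw [aS, inv_one_sub_qpow]

lemma coeff_aS_z {n : ℕ} {e : Fin 3 →₀ ℕ} (h : e 2 ≠ n + 1) : coeff e (aS n) = 0 := by
  rw [aS_eq, coeff_smul, X_pow_eq (2 : Fin 3) (n + 1), coeff_mul_monomial]
  by_cases hle : Finsupp.single (2 : Fin 3) (n + 1) ≤ e
  · have hm2 : n + 1 ≤ e 2 := Finsupp.single_le_iff.1 hle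
    rw [if_pos hle, mul_one, coeff_B_z _ _ (by
      rw [(sub_single2_apply e (n + 1)).2.2]
      omega), mul_zero]
  · rw [if_neg hle, mul_zero]

lemma coeff_aS {n : ℕ} {e : Fin 3 →₀ ℕ} (h : e 2 = n + 1) :
    coeff e (aS n) = ((n + 1 : ℚ))⁻¹ *
      ((if e 1 = 0 ∧ (n + 1) ∣ e 0 then (1 : ℚ) else 0) -
       (if e 1 = (n + 1) ∧ (n + 1) ∣ e 0 then (1 : ℚ) else 0)) := by
  obtain ⟨hg0, hg1, hg2⟩ := sub_single2_apply e (n + 1)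
  rw [aS_eq, coeff_smul, X_pow_eq (2 : Fin 3) (n + 1), coeff_mul_monomial,
    if_pos (Finsupp.single_le_iff.2 (by omega)), mul_one,
    coeff_B (n + 1) (by omega) _ (by rw [hg2]; omega), hg0, hg1]

lemma hasSum_aS : HasSum aS (glueS aS (fun d => Finset.range (d 2))) := by
  refine hasSum_glueS _ _ fun d n hn => ?_
  rw [Finset.mem_range] at hn
  exact coeff_aS_z (by omega)

lemma coeff_L (e : Fin 3 →₀ ℕ) :
    coeff e (∑' n, aS n) = if e 2 = 0 then 0 else ((e 2 : ℚ))⁻¹ *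
      ((if e 1 = 0 ∧ e 2 ∣ e 0 then (1 : ℚ) else 0) -
       (if e 1 = e 2 ∧ e 2 ∣ e 0 then (1 : ℚ) else 0)) := by
  rw [hasSum_aS.tsum_eq, coeff_glueS]
  by_cases h2 : e 2 = 0
  · rw [if_pos h2, h2]
    simp
  · rw [if_neg h2]
    have hmem : e 2 - 1 ∈ Finset.range (e 2) := Finset.mem_range.2 (by omega)
    rw [Finset.sum_eq_single_of_mem (e 2 - 1) hmem
      (fun n _ hne => coeff_aS_z (by omega)), coeff_aS (by omega)]
    have hcast : ((e 2 - 1 : ℕ) : ℚ) + 1 = (e 2 : ℚ) := by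
      rw [Nat.cast_sub (by omega : 1 ≤ e 2), Nat.cast_one, sub_add_cancel]
    rw [show (e 2 - 1) + 1 = e 2 by omega, hcast]

noncomputable def u1 (k : ℕ) : R3 := (X 0 : R3) ^ k * X 2
noncomputable def u2 (k : ℕ) : R3 := (X 1 : R3) * (X 0) ^ k * X 2

lemma u1_pow (k m : ℕ) : u1 k ^ m =
    monomial (Finsupp.single (0 : Fin 3) (k * m) + Finsupp.single 2 m) 1 := by
  rw [u1, mul_pow, ← pow_mul, X_pow_eq, X_pow_eq, monomial_mul_monomial, one_mul]

lemma u2_pow (k m : ℕ) : u2 k ^ m =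
    monomial (Finsupp.single (1 : Fin 3) m + Finsupp.single 0 (k * m) + Finsupp.single 2 m)
      1 := by
  rw [u2, mul_pow, mul_pow, ← pow_mul, X_pow_eq, X_pow_eq, X_pow_eq,
    monomial_mul_monomial, monomial_mul_monomial, one_mul, one_mul]

lemma coeff_u1_pow (k m : ℕ) (e : Fin 3 →₀ ℕ) :
    coeff e (u1 k ^ m) = if e 0 = k * m ∧ e 1 = 0 ∧ e 2 = m then (1 : ℚ) else 0 := by
  classical
  rw [u1_pow, coeff_monomial]
  have hcond : (e = Finsupp.single (0 : Fin 3) (k * m) + Finsupp.single 2 m)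
      ↔ (e 0 = k * m ∧ e 1 = 0 ∧ e 2 = m) := by
    rw [fin3_eq_iff]
    simp [Finsupp.add_apply, Finsupp.single_apply, Fin.ext_iff]
  by_cases hc : e 0 = k * m ∧ e 1 = 0 ∧ e 2 = m
  · rw [if_pos (hcond.2 hc), if_pos hc]
  · rw [if_neg (fun hh => hc (hcond.1 hh)), if_neg hc]

lemma coeff_u2_pow (k m : ℕ) (e : Fin 3 →₀ ℕ) :
    coeff e (u2 k ^ m) = if e 0 = k * m ∧ e 1 = m ∧ e 2 = m then (1 : ℚ) else 0 := by
  classical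
  rw [u2_pow, coeff_monomial]
  have hcond : (e = Finsupp.single (1 : Fin 3) m + Finsupp.single 0 (k * m) +
        Finsupp.single 2 m)
      ↔ (e 0 = k * m ∧ e 1 = m ∧ e 2 = m) := by
    rw [fin3_eq_iff]
    simp [Finsupp.add_apply, Finsupp.single_apply, Fin.ext_iff]
  by_cases hc : e 0 = k * m ∧ e 1 = m ∧ e 2 = m
  · rw [if_pos (hcond.2 hc), if_pos hc]
  · rw [if_neg (fun hh => hc (hcond.1 hh)), if_neg hc]

lemma hom1_u1 (k : ℕ) : Hom1 (u1 k) := by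
  intro e he
  have := coeff_u1_pow k 1 e
  rw [pow_one] at this
  rw [this, if_neg (fun hc => he hc.2.2)]

lemma hom1_u2 (k : ℕ) : Hom1 (u2 k) := by
  intro e he
  have := coeff_u2_pow k 1 e
  rw [pow_one] at this
  rw [this, if_neg (fun hc => he hc.2.2)]

noncomputable def lS (k : ℕ) : R3 := Lam (u1 k) - Lam (u2 k)

lemma Zo_lS (k : ℕ) : Zo (lS k) := (Zo_Lam _).sub (Zo_Lam _)

lemma coeff_lS {e : Fin 3 →₀ ℕ} (h2 : e 2 ≠ 0) (k : ℕ) :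
    coeff e (lS k) = if e 0 = k * e 2 then
      ((e 2 : ℚ))⁻¹ * ((if e 1 = 0 then (1 : ℚ) else 0) - (if e 1 = e 2 then 1 else 0))
    else 0 := by
  rw [lS, map_sub, coeff_Lam, coeff_Lam, if_neg h2, if_neg h2, coeff_u1_pow, coeff_u2_pow]
  by_cases h0 : e 0 = k * e 2
  · have hA : (if e 0 = k * e 2 ∧ e 1 = 0 ∧ e 2 = e 2 then (1 : ℚ) else 0)
        = (if e 1 = 0 then (1 : ℚ) else 0) := by
      by_cases hb : e 1 = 0 <;> simp [hb, h0]
    have hB : (if e 0 = k * e 2 ∧ e 1 = e 2 ∧ e 2 = e 2 then (1 : ℚ) else 0)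
        = (if e 1 = e 2 then (1 : ℚ) else 0) := by
      by_cases hb : e 1 = e 2 <;> simp [hb, h0]
    rw [hA, hB, if_pos h0]
    ring
  · rw [if_neg (by tauto), if_neg (by tauto), if_neg h0]
    ring

lemma sum_coeff_lS {e : Fin 3 →₀ ℕ} {t : Finset ℕ} (ht : Finset.range (e 0 + 1) ⊆ t) :
    ∑ k ∈ t, coeff e (lS k) = coeff e (∑' n, aS n) := by
  rw [coeff_L]
  by_cases h2 : e 2 = 0
  · rw [if_pos h2]
    exact Finset.sum_eq_zero fun k _ => (Zo_lS k) e h2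
  · rw [if_neg h2]
    set c : ℚ := ((e 2 : ℚ))⁻¹ *
      ((if e 1 = 0 then (1 : ℚ) else 0) - (if e 1 = e 2 then 1 else 0)) with hc
    have step1 : ∑ k ∈ t, coeff e (lS k) = ∑ k ∈ t, if e 0 = k * e 2 then c else 0 :=
      Finset.sum_congr rfl fun k _ => coeff_lS h2 k
    have step2 : (∑ k ∈ t, if e 0 = k * e 2 then c else 0) = if e 2 ∣ e 0 then c else 0 := by
      by_cases hd : e 2 ∣ e 0
      · rw [if_pos hd]
        have hk0 : e 0 / e 2 ∈ t := ht (Finset.mem_range.2 (by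
          have := Nat.div_le_self (e 0) (e 2); omega))
        rw [Finset.sum_eq_single_of_mem (e 0 / e 2) hk0 (fun k _ hk => by
          rw [if_neg]
          intro hh
          refine hk ?_
          have h2' : 0 < e 2 := by omega
          rw [hh, Nat.mul_div_cancel _ h2'])]
        rw [if_pos (Nat.div_mul_cancel hd).symm]
      · rw [if_neg hd]
        exact Finset.sum_eq_zero fun k _ => if_neg (fun hh => hd ⟨k, by rw [hh, mul_comm]⟩)
    have step3 : (if e 2 ∣ e 0 then c else 0) = ((e 2 : ℚ))⁻¹ *
        ((if e 1 = 0 ∧ e 2 ∣ e 0 then (1 : ℚ) else 0) -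
         (if e 1 = e 2 ∧ e 2 ∣ e 0 then (1 : ℚ) else 0)) := by
      by_cases hd : e 2 ∣ e 0
      · rw [if_pos hd, hc]
        simp [hd]
      · rw [if_neg hd, if_neg (by tauto), if_neg (by tauto)]
        ring
    rw [step1, step2, step3]

lemma Zo_L : Zo (∑' n, aS n) := fun e he => by rw [coeff_L, if_pos he]

lemma below_sum_lS (d : Fin 3 →₀ ℕ) {t : Finset ℕ} (ht : Finset.range (d 0 + 1) ⊆ t) :
    Below d (∑ k ∈ t, lS k) (∑' n, aS n) := by
  intro e he
  rw [map_sum]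
  refine sum_coeff_lS (subset_trans (Finset.range_subset_range.2 ?_) ht)
  have : e 0 ≤ d 0 := he 0
  omega

lemma fS_eq (k : ℕ) : (1 - (X 1 : R3) * (X 0) ^ k * X 2) * (1 - (X 0) ^ k * X 2)⁻¹
    = mvExp3' (lS k) := by
  rw [show (X 1 : R3) * (X 0) ^ k * X 2 = u2 k from rfl,
    show (X 0 : R3) ^ k * X 2 = u1 k from rfl,
    one_sub_eq_exp_neg (hom1_u2 k), one_sub_inv_eq_exp (hom1_u1 k),
    ← mvExp3'_add (Zo_Lam _).neg (Zo_Lam _), lS, neg_add_eq_sub]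

lemma prod_fS (t : Finset ℕ) :
    (∏ k ∈ t, (1 - (X 1 : R3) * (X 0) ^ k * X 2) * (1 - (X 0) ^ k * X 2)⁻¹)
      = mvExp3' (∑ k ∈ t, lS k) := by
  induction t using Finset.induction with
  | empty => rw [Finset.prod_empty, Finset.sum_empty, mvExp3'_zero]
  | insert a s h ih =>
    rw [Finset.prod_insert h, Finset.sum_insert h, ih, fS_eq,
      mvExp3'_add (Zo_lS a) (Zo.finsum fun i _ => Zo_lS i)]

lemma hasProd_final :
    HasProd (fun k => (1 - (X 1 : R3) * (X 0) ^ k * X 2) * (1 - (X 0) ^ k * X 2)⁻¹)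
      (mvExp3' (∑' n, aS n)) := by
  refine tendsto_coeffwise fun d => ?_
  filter_upwards [Filter.eventually_ge_atTop (Finset.range (d 0 + 1))] with t ht
  rw [prod_fS t]
  exact Below.exp (Zo.finsum fun i _ => Zo_lS i) Zo_L (below_sum_lS d ht) d le_rfl


/-- In `ℚ[[q,t,z]]` (variables `q = X 0`, `t = X 1`, `z = X 2`) with the
coefficientwise topology,
`exp( ∑_{n ≥ 1} (1/n) (1 − tⁿ)(1 − qⁿ)⁻¹ zⁿ ) = ∏_{k ≥ 0} (1 − t qᵏ z)(1 − qᵏ z)⁻¹`,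
the one-variable Cauchy kernel identity
`exp( ∑_{n≥1} (1/n)((1−tⁿ)/(1−qⁿ)) zⁿ ) = (tz; q)_∞ / (z; q)_∞`. -/
theorem exp_sum_eq_cauchy_kernel_one_var :
    mvExp3 (∑' n : ℕ, ((n + 1 : ℚ))⁻¹ •
        ((1 - (X 1 : MvPowerSeries (Fin 3) ℚ) ^ (n + 1)) * (1 - (X 0) ^ (n + 1))⁻¹ *
          (X 2) ^ (n + 1))) =
      ∏' k : ℕ, ((1 - (X 1 : MvPowerSeries (Fin 3) ℚ) * (X 0) ^ k * X 2) *
        (1 - (X 0) ^ k * X 2)⁻¹) := by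
  exact hasProd_final.tprod_eq.symm
end
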